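/- arXiv:2308.16500 — 9 statements merged into one kernel-verified Lean document; each statement's English description precedes it below -/
import Mathlib

section
/- Let F be a Pythagorean field of characteristic not 2 and let H = H(a,b)_F be a quaternion algebra over F. Then the set of commutators {xy − yx : x, y ∈ H} equals exactly the F-span of {i, j, k}, i.e., {αi + βj + γk : α, β, γ ∈ F}. -/
/-!
The real part of `y * z` is symmetric in `y` and `z`, so commutators are pure. Conversely, from
`[i, j] = 2k`, `[j, k] = -2c₂ i` and `[k, i] = -2c₁ j`, a pure quaternion `αi + βj + γk` is
`[j, z]` with `z` in the span of `i, k` when `β = 0`, and otherwise `[y, z]` with `y` in the span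
of `i, j` and `z - k` in the span of `j`.
-/

open Quaternion

namespace QuaternionAlgebra

theorem re_eq_zero_iff_exists_eq_smul_add {R : Type*} [CommRing R] {c₁ c₂ c₃ : R}
    {x : ℍ[R, c₁, c₂, c₃]} :
    x.re = 0 ↔ ∃ α β γ : R,
      x = α • (⟨0, 1, 0, 0⟩ : ℍ[R, c₁, c₂, c₃]) + β • ⟨0, 0, 1, 0⟩ + γ • ⟨0, 0, 0, 1⟩ := by
  constructor
  · intro hx
    exact ⟨x.imI, x.imJ, x.imK, by ext <;> simp [hx]⟩
  · rintro ⟨α, β, γ, rfl⟩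
    simp

theorem re_commutator {R : Type*} [CommRing R] {c₁ c₂ : R} (y z : ℍ[R, c₁, c₂]) :
    (y * z - z * y).re = 0 := by
  simp only [re_sub, re_mul]
  ring

theorem exists_eq_commutator_of_re_eq_zero {F : Type*} [Field F] {c₁ c₂ : F} (h2 : (2 : F) ≠ 0)
    (hc₁ : c₁ ≠ 0) (hc₂ : c₂ ≠ 0) {x : ℍ[F, c₁, c₂]} (hx : x.re = 0) :
    ∃ y z : ℍ[F, c₁, c₂], x = y * z - z * y := by
  obtain ⟨r, α, β, γ⟩ := x
  obtain rfl : r = 0 := hx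
  by_cases hβ : β = 0
  · subst hβ
    refine ⟨⟨0, 0, 1, 0⟩, ⟨0, -γ / 2, 0, -α / (2 * c₂)⟩, ?_⟩
    ext <;> simp <;> field_simp <;> ring
  · refine ⟨⟨0, β / (2 * c₁), -α / (2 * c₂), 0⟩, ⟨0, 0, c₁ * γ / β, 1⟩, ?_⟩
    ext <;> simp <;> field_simp <;> ring

end QuaternionAlgebra

theorem stmt_4_general (F : Type*) [Field F] (h2 : (2 : F) ≠ 0)
    (a b : F) (ha : a ≠ 0) (hb : b ≠ 0) :
    {x : ℍ[F, -a, -b] | ∃ y z : ℍ[F, -a, -b], x = y * z - z * y} =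
      {x : ℍ[F, -a, -b] | ∃ α β γ : F,
        x = α • (⟨0, 1, 0, 0⟩ : ℍ[F, -a, -b]) + β • ⟨0, 0, 1, 0⟩ + γ • ⟨0, 0, 0, 1⟩} := by
  ext x
  simp only [Set.mem_ofPred_eq, ← QuaternionAlgebra.re_eq_zero_iff_exists_eq_smul_add]
  constructor
  · rintro ⟨y, z, rfl⟩
    exact QuaternionAlgebra.re_commutator y z
  · exact QuaternionAlgebra.exists_eq_commutator_of_re_eq_zero h2 (neg_ne_zero.2 ha) (neg_ne_zero.2 hb)

theorem stmt_4 (F : Type*) [Field F] (h2 : (2 : F) ≠ 0)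
    (hpyth : ∀ x y : F, ∃ z : F, x ^ 2 + y ^ 2 = z ^ 2)
    (a b : F) (ha : a ≠ 0) (hb : b ≠ 0) :
    {x : ℍ[F, -a, -b] | ∃ y z : ℍ[F, -a, -b], x = y * z - z * y} =
      {x : ℍ[F, -a, -b] | ∃ α β γ : F,
        x = α • (⟨0, 1, 0, 0⟩ : ℍ[F, -a, -b]) + β • ⟨0, 0, 1, 0⟩ + γ • ⟨0, 0, 0, 1⟩} :=
  stmt_4_general F h2 a b ha hb
end

section
/- Let H be a quaternion algebra over a field F of characteristic 2, with basis 1, i, j, k where i² + i ∈ F, j² ∈ F is nonzero, and k = ij = j(i+1). Then the set of commutators {xy − yx : x, y ∈ H} equals {α j² + β j + γ k : α, β, γ ∈ F}, and this set is an F-vector subspace of H. -/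
/-!
The commutator `[y, z] = y z - z y` is bilinear, alternating and kills `1`, so every commutator
lies in the span of `[i, j] = j`, `[i, ij] = i [i, j] = ij` and `[ij, j] = [i, j] j = j²`.
Conversely, `[i, β j + γ ij] = β j + γ ij`, and for `α ≠ 0` the element `α j² + α β j + γ ij`
is `[ij + β i, α j - γ i]`.
-/

theorem mul_sub_mul_mem_span_of_span_eq_top {R A : Type*} [CommRing R] [Ring A] [Algebra R A]
    {s : Set A} (hs : Submodule.span R s = ⊤) (x y : A) :
    x * y - y * x ∈ Submodule.span R (Set.image2 (fun a b => a * b - b * a) s s) := by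
  have := Submodule.apply_mem_map₂ (LinearMap.mul R A - (LinearMap.mul R A).flip)
    (Submodule.mem_top (x := x)) (Submodule.mem_top (x := y))
  rwa [← hs, Submodule.map₂_span_span] at this

theorem mul_mul_sub_mul_mul_left {A : Type*} [Ring A] (a b : A) :
    a * (a * b) - a * b * a = a * (a * b - b * a) := by
  noncomm_ring

theorem mul_mul_sub_mul_mul_right {A : Type*} [Ring A] (a b : A) :
    a * b * b - b * (a * b) = (a * b - b * a) * b := by
  noncomm_ring

section

variable {F H : Type*} [Ring H] {i j : H}
  (hij : i * j = j * (i + 1))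
include hij

theorem mul_sub_mul_eq_right_of_mul_eq : i * j - j * i = j := by
  rw [hij]; noncomm_ring

theorem mul_sub_mul_eq_mul_of_mul_eq : i * (i * j) - i * j * i = i * j := by
  rw [mul_mul_sub_mul_mul_left, mul_sub_mul_eq_right_of_mul_eq hij]

theorem mul_sub_mul_eq_sq_of_mul_eq : i * j * j - j * (i * j) = j * j := by
  rw [mul_mul_sub_mul_mul_right, mul_sub_mul_eq_right_of_mul_eq hij]

theorem mul_sub_mul_mem_span_of_mem [CommRing F] [Algebra F H] {a b : H} (ha : a ∈ ({1, i, j, i * j} : Set H))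
    (hb : b ∈ ({1, i, j, i * j} : Set H)) :
    a * b - b * a ∈ Submodule.span F {j * j, j, i * j} := by
  have h₁ := mul_sub_mul_eq_right_of_mul_eq hij
  have h₂ := mul_sub_mul_eq_mul_of_mul_eq hij
  have h₃ := mul_sub_mul_eq_sq_of_mul_eq hij
  have h₁' : j * i - i * j = -j := by rw [← neg_sub, h₁]
  have h₂' : i * j * i - i * (i * j) = -(i * j) := by rw [← neg_sub, h₂]
  have h₃' : j * (i * j) - i * j * j = -(j * j) := by rw [← neg_sub, h₃]
  have mem : ∀ x ∈ ({j * j, j, i * j} : Set H), x ∈ Submodule.span F {j * j, j, i * j} :=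
    fun x hx => Submodule.subset_span hx
  simp only [Set.mem_insert_iff, Set.mem_singleton_iff] at ha hb mem
  rcases ha with ha | ha | ha | ha <;> rcases hb with hb | hb | hb | hb <;> rw [ha, hb] <;>
    simp only [one_mul, mul_one, sub_self, h₁, h₂, h₃, h₁', h₂', h₃', Submodule.neg_mem_iff,
      Submodule.zero_mem, mem, true_or, or_true]

theorem exists_mul_sub_mul_eq [Field F] [Algebra F H] (α β γ : F) :
    ∃ y z : H, y * z - z * y = α • (j * j) + β • j + γ • (i * j) := by
  have h₁ := mul_sub_mul_eq_right_of_mul_eq hij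
  have h₂ := mul_sub_mul_eq_mul_of_mul_eq hij
  have h₃ := mul_sub_mul_eq_sq_of_mul_eq hij
  rcases eq_or_ne α 0 with rfl | hα
  · refine ⟨i, β • j + γ • (i * j), ?_⟩
    simp only [mul_add, add_mul, smul_mul_assoc, mul_smul_comm, sub_add_eq_sub_sub]
    linear_combination (norm := module) β • h₁ + γ • h₂
  · obtain ⟨β, rfl⟩ : ∃ β', β = α * β' := ⟨β / α, (mul_div_cancel₀ β hα).symm⟩
    refine ⟨i * j + β • i, α • j - γ • i, ?_⟩
    simp only [mul_add, add_mul, mul_sub, sub_mul, smul_mul_assoc, mul_smul_comm]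
    linear_combination (norm := module) α • h₃ + γ • h₂ + (α * β) • h₁

theorem setOf_mul_sub_mul_eq_span [Field F] [Algebra F H]
    (hspan : Submodule.span F {1, i, j, i * j} = ⊤) :
    {x : H | ∃ y z : H, x = y * z - z * y} = Submodule.span F {j * j, j, i * j} := by
  refine subset_antisymm ?_ fun x hx => ?_
  · rintro _ ⟨y, z, rfl⟩
    refine Submodule.span_le.2 ?_ (mul_sub_mul_mem_span_of_span_eq_top hspan y z)
    rintro _ ⟨a, ha, b, hb, rfl⟩
    exact mul_sub_mul_mem_span_of_mem hij ha hb
  · obtain ⟨α, β, γ, rfl⟩ := Submodule.mem_span_triple.1 hx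
    obtain ⟨y, z, h⟩ := exists_mul_sub_mul_eq hij α β γ
    exact ⟨y, z, h.symm⟩

end

theorem stmt_6_general (F : Type*) [Field F]
    (H : Type*) [Ring H] [Algebra F H]
    (i j k : H)
    (bH : Module.Basis (Fin 4) F H)
    (hbasis : bH 0 = 1 ∧ bH 1 = i ∧ bH 2 = j ∧ bH 3 = k)
    (hk : k = i * j) (hij : i * j = j * (i + 1)) :
    {x : H | ∃ y z : H, x = y * z - z * y} =
      {x : H | ∃ α β γ : F, x = α • (j * j) + β • j + γ • k} ∧
    ∃ V : Submodule F H,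
      (V : Set H) = {x : H | ∃ y z : H, x = y * z - z * y} := by
  obtain ⟨hb0, hb1, hb2, hb3⟩ := hbasis
  subst hk
  have hrange : Set.range bH = {1, i, j, i * j} := by
    ext x
    simp [Fin.exists_fin_succ, hb0, hb1, hb2, hb3, eq_comm]
  have hcomm := setOf_mul_sub_mul_eq_span hij (hrange ▸ bH.span_eq)
  refine ⟨?_, _, hcomm.symm⟩
  rw [hcomm]
  ext x
  simp only [SetLike.mem_coe, Submodule.mem_span_triple, Set.mem_ofPred_eq, eq_comm]

/-- in characteristic 2, the set of commutators of a quaternion algebra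
(basis `1, i, j, k`, `i² + i ∈ F`, `j² ∈ F` nonzero, `k = ij = j(i+1)`)
equals `{α j² + β j + γ k}` and is an `F`-subspace. -/
theorem stmt_6 (F : Type*) [Field F] (hchar : ringChar F = 2)
    (H : Type*) [Ring H] [Algebra F H]
    (i j k : H)
    (bH : Module.Basis (Fin 4) F H)
    (hbasis : bH 0 = 1 ∧ bH 1 = i ∧ bH 2 = j ∧ bH 3 = k)
    (hi : ∃ t : F, i * i + i = algebraMap F H t)
    (hj : ∃ b : F, b ≠ 0 ∧ j * j = algebraMap F H b)
    (hk : k = i * j) (hij : i * j = j * (i + 1)) :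
    {x : H | ∃ y z : H, x = y * z - z * y} =
      {x : H | ∃ α β γ : F, x = α • (j * j) + β • j + γ • k} ∧
    ∃ V : Submodule F H,
      (V : Set H) = {x : H | ∃ y z : H, x = y * z - z * y} :=
  stmt_6_general F H i j k bH hbasis hk hij
end

section
/- Let F be a Pythagorean field of characteristic not 2 and H = H(1,1)_F the quaternion algebra with i² = j² = −1. Define v₁(x₁,x₂) = x₁x₂ − x₂x₁ and recursively v_k(x₁,…,x_{2^k}) = v₁(v_{k−1}(x₁,…,x_{2^{k−1}}), v_{k−1}(x_{2^{k−1}+1},…,x_{2^k})). Then for every positive integer k, the image v_k(H) = {v_k(a₁,…,a_{2^k}) : aᵢ ∈ H} equals the set of commutators {xy − yx : x, y ∈ H}. -/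
/-!
A commutator `xy - yx` of quaternions only depends on the pure parts of `x` and `y`, so it is
pure; conversely, in characteristic not 2 every pure quaternion is a commutator of two pure
quaternions. Hence every commutator is a commutator of two commutators, and the images of the
iterated commutator polynomials `v_k` all coincide with the set of commutators.
-/

open Quaternion

/-- Image of the iterated commutator polynomial `v_k`:
`vImg H 1` is the set of commutators and
`vImg H (k+1) = {uv - vu : u, v ∈ vImg H k}`. -/
def vImg (H : Type*) [Ring H] : ℕ → Set H
  | 0 => Set.univ
  | n + 1 => {x : H | ∃ u ∈ vImg H n, ∃ v ∈ vImg H n, x = u * v - v * u}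

def ringCommutators (H : Type*) [Ring H] : Set H :=
  {x : H | ∃ y z : H, x = y * z - z * y}

section vImg

variable {H : Type*} [Ring H]

theorem vImg_one : vImg H 1 = ringCommutators H := by
  ext x
  simp only [vImg, ringCommutators, Set.mem_univ, true_and, Set.mem_ofPred_eq]

theorem vImg_eq_ringCommutators
    (h : ∀ y z : H, ∃ u ∈ ringCommutators H, ∃ v ∈ ringCommutators H,
      y * z - z * y = u * v - v * u)
    {k : ℕ} (hk : 1 ≤ k) : vImg H k = ringCommutators H := by
  induction k, hk using Nat.le_induction with
  | base => exact vImg_one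
  | succ n _ ih =>
    ext x
    simp only [vImg, ih]
    constructor
    · rintro ⟨u, -, v, -, rfl⟩
      exact ⟨u, v, rfl⟩
    · rintro ⟨y, z, rfl⟩
      exact h y z

end vImg

theorem QuaternionAlgebra.mul_sub_mul_eq_im {R : Type*} [CommRing R] {c₁ c₂ c₃ : R}
    (x y : ℍ[R,c₁,c₂,c₃]) : x * y - y * x = x.im * y.im - y.im * x.im := by
  conv_lhs => rw [← x.re_add_im, ← y.re_add_im]
  rw [add_mul, add_mul, mul_add, mul_add, mul_add, mul_add, coe_commutes x.re y.im,
    coe_commutes y.re x.im, ← coe_mul, ← coe_mul, mul_comm x.re]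
  abel

theorem eq_zero_of_sq_add_sq_eq_zero {F : Type*} [Field F] (h2 : (2 : F) ≠ 0) {a b c : F}
    (hbc : b ^ 2 + c ^ 2 = 0) (hac : a ^ 2 + c ^ 2 = 0) (hab : a ^ 2 + b ^ 2 = 0) :
    a = 0 ∧ b = 0 ∧ c = 0 := by
  have ha : 2 * a ^ 2 = 0 := by linear_combination hac + hab - hbc
  have hb : 2 * b ^ 2 = 0 := by linear_combination hbc + hab - hac
  have hc : 2 * c ^ 2 = 0 := by linear_combination hbc + hac - hab
  simp_all

/- The commutator of pure quaternions `u, v` is `2 (u × v)`. Each witness `u` is orthogonal to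
`w = (a, b, c)`, and `v = (w × u) / (2 u·u)` then gives `u × v = w / 2`; the case split only
finds such a `u` with `u·u ≠ 0`. -/
theorem mk_zero_mem_ringCommutators {F : Type*} [Field F] (h2 : (2 : F) ≠ 0) (a b c : F) :
    (⟨0, a, b, c⟩ : ℍ[F,-1,-1]) ∈ ringCommutators ℍ[F,-1,-1] := by
  by_cases hbc : b ^ 2 + c ^ 2 ≠ 0
  · refine ⟨⟨0, 0, c, -b⟩, ⟨0, -(1 / 2), a * b / (2 * (b ^ 2 + c ^ 2)),
      a * c / (2 * (b ^ 2 + c ^ 2))⟩, ?_⟩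
    ext <;> simp <;> field_simp <;> ring
  by_cases hac : a ^ 2 + c ^ 2 ≠ 0
  · refine ⟨⟨0, -c, 0, a⟩, ⟨0, a * b / (2 * (a ^ 2 + c ^ 2)), -(1 / 2),
      b * c / (2 * (a ^ 2 + c ^ 2))⟩, ?_⟩
    ext <;> simp <;> field_simp <;> ring
  by_cases hab : a ^ 2 + b ^ 2 ≠ 0
  · refine ⟨⟨0, b, -a, 0⟩, ⟨0, a * c / (2 * (a ^ 2 + b ^ 2)),
      b * c / (2 * (a ^ 2 + b ^ 2)), -(1 / 2)⟩, ?_⟩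
    ext <;> simp <;> field_simp <;> ring
  push Not at hbc hac hab
  obtain ⟨rfl, rfl, rfl⟩ := eq_zero_of_sq_add_sq_eq_zero h2 hbc hac hab
  exact ⟨0, 0, by ext <;> simp⟩

theorem im_mem_ringCommutators {F : Type*} [Field F] (h2 : (2 : F) ≠ 0) (x : ℍ[F,-1,-1]) :
    x.im ∈ ringCommutators ℍ[F,-1,-1] :=
  mk_zero_mem_ringCommutators h2 x.imI x.imJ x.imK

theorem stmt_9_general (F : Type*) [Field F] (h2 : (2 : F) ≠ 0)
    (k : ℕ) (hk : 1 ≤ k) :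
    vImg ℍ[F, -1, -1] k =
      {x : ℍ[F, -1, -1] | ∃ y z : ℍ[F, -1, -1], x = y * z - z * y} :=
  vImg_eq_ringCommutators (fun y z => ⟨y.im, im_mem_ringCommutators h2 y,
    z.im, im_mem_ringCommutators h2 z, y.mul_sub_mul_eq_im z⟩) hk

/-- over a Pythagorean field of characteristic not 2, the image of every
iterated commutator polynomial `v_k` on `ℍ(1,1)_F` equals the set of commutators. -/
theorem stmt_9 (F : Type*) [Field F] (h2 : (2 : F) ≠ 0)
    (hpyth : ∀ x y : F, ∃ z : F, x ^ 2 + y ^ 2 = z ^ 2)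
    (k : ℕ) (hk : 1 ≤ k) :
    vImg ℍ[F, -1, -1] k =
      {x : ℍ[F, -1, -1] | ∃ y z : ℍ[F, -1, -1], x = y * z - z * y} :=
  stmt_9_general F h2 k hk
end

section
/- Let H = H(a,b)_F be a division quaternion algebra over a field F of characteristic not 2, and suppose either F is quadratically closed, or F is Pythagorean and a = b = 1. Then for every α = a₀ + a₁i + a₂j + a₃k ∈ H there exist a nonzero x ∈ H and r ∈ F such that x⁻¹αx = a₀ + ri. -/
open Quaternion

/-!
Two elements of `H` with the same real part and the same norm are conjugate, and an explicit
conjugator can be written down: if `a r² = a a₁² + b a₂² + a b a₃²`, then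
`x = (a₁ + r) i + a₂ j + a₃ k` satisfies `α x = x (a₀ + r i)`. The hypotheses on `F` provide
such an `r`, and `x` is nonzero (hence invertible) unless `α` already has the form `a₀ + a₁ i`.
-/

namespace QuaternionAlgebra

variable {R : Type*} [CommRing R] {c₁ c₂ : R}

theorem semiconjBy_mk_re_imI (α : ℍ[R, c₁, c₂]) {r : R}
    (hr : c₁ * r ^ 2 = c₁ * α.imI ^ 2 + c₂ * α.imJ ^ 2 - c₁ * c₂ * α.imK ^ 2) :
    SemiconjBy (⟨0, α.imI + r, α.imJ, α.imK⟩ : ℍ[R, c₁, c₂]) ⟨α.re, r, 0, 0⟩ α := by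
  obtain ⟨a₀, a₁, a₂, a₃⟩ := α
  simp only [SemiconjBy, mk_mul_mk] at hr ⊢
  ext <;> dsimp only
  case re => linear_combination hr
  all_goals ring

end QuaternionAlgebra

theorem exists_mul_sq_eq_of_forall_exists_sq {F : Type*} [Field F]
    (hsq : ∀ x : F, ∃ y : F, y ^ 2 = x) {a : F} (ha : a ≠ 0) (N : F) :
    ∃ r : F, a * r ^ 2 = N := by
  obtain ⟨r, hr⟩ := hsq (N / a)
  exact ⟨r, by rw [hr, mul_div_cancel₀ N ha]⟩

theorem exists_sq_eq_add_sq_add_sq {F : Type*} [CommRing F]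
    (hpyth : ∀ x y : F, ∃ z : F, x ^ 2 + y ^ 2 = z ^ 2) (x y z : F) :
    ∃ r : F, r ^ 2 = x ^ 2 + y ^ 2 + z ^ 2 := by
  obtain ⟨s, hs⟩ := hpyth x y
  obtain ⟨r, hr⟩ := hpyth s z
  exact ⟨r, by rw [hs, hr]⟩

theorem stmt_10_general (F : Type*) [Field F] (a b : F) (ha : a ≠ 0)
    (hdiv : ∀ x : ℍ[F, -a, -b], x ≠ 0 → IsUnit x)
    (hcase : (∀ x : F, ∃ y : F, y ^ 2 = x) ∨
      ((∀ x y : F, ∃ z : F, x ^ 2 + y ^ 2 = z ^ 2) ∧ a = 1 ∧ b = 1))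
    (α : ℍ[F, -a, -b]) :
    ∃ x : (ℍ[F, -a, -b])ˣ, ∃ r : F,
      (↑x⁻¹ : ℍ[F, -a, -b]) * α * ↑x = ⟨α.re, r, 0, 0⟩ := by
  obtain ⟨r, hr⟩ : ∃ r : F, a * r ^ 2 = a * α.imI ^ 2 + b * α.imJ ^ 2 + a * b * α.imK ^ 2 := by
    rcases hcase with hsq | ⟨hpyth, rfl, rfl⟩
    · exact exists_mul_sq_eq_of_forall_exists_sq hsq ha _
    · simpa using exists_sq_eq_add_sq_add_sq hpyth α.imI α.imJ α.imK
  by_cases hJK : α.imJ = 0 ∧ α.imK = 0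
  · refine ⟨1, α.imI, ?_⟩
    ext <;> simp [hJK.1, hJK.2]
  have hx : (⟨0, α.imI + r, α.imJ, α.imK⟩ : ℍ[F, -a, -b]) ≠ 0 := fun h ↦
    hJK ⟨congrArg QuaternionAlgebra.imJ h, congrArg QuaternionAlgebra.imK h⟩
  obtain ⟨u, hu⟩ := hdiv _ hx
  refine ⟨u, r, ?_⟩
  rw [mul_assoc, Units.inv_mul_eq_iff_eq_mul, hu]
  exact (α.semiconjBy_mk_re_imI (by linear_combination -hr)).symm

/-- diagonalization-type lemma: every quaternion of a division quaternion
algebra (over a quadratically closed field, or a Pythagorean field with `a = b = 1`)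
is conjugate to one of the form `a₀ + r i`. -/
theorem stmt_10 (F : Type*) [Field F] (h2 : (2 : F) ≠ 0) (a b : F)
    (ha : a ≠ 0) (hb : b ≠ 0)
    (hdiv : ∀ x : ℍ[F, -a, -b], x ≠ 0 → IsUnit x)
    (hcase : (∀ x : F, ∃ y : F, y ^ 2 = x) ∨
      ((∀ x y : F, ∃ z : F, x ^ 2 + y ^ 2 = z ^ 2) ∧ a = 1 ∧ b = 1))
    (α : ℍ[F, -a, -b]) :
    ∃ x : (ℍ[F, -a, -b])ˣ, ∃ r : F,
      (↑x⁻¹ : ℍ[F, -a, -b]) * α * ↑x = ⟨α.re, r, 0, 0⟩ :=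
  stmt_10_general F a b ha hdiv hcase α
end

section
/- Let F be a field with char F ≠ 2 that is Pythagorean, and let H = H(1,1)_F be the division quaternion algebra with i² = j² = −1 (assume H is a division ring). Then every element of H is a product of two commutators: H = {(x₁y₁ − y₁x₁)(x₂y₂ − y₂x₂) : x₁, y₁, x₂, y₂ ∈ H}. -/
/-!
A nonzero pure quaternion `p` squares to a nonzero scalar `s`, and anticommutes with every
pure quaternion `v` for which `p * v` is again pure. For such `v` this gives
`p * (p * v) - (p * v) * p = 2 s v`, so (as `2 ≠ 0`) every pure quaternion is a commutator.
Every quaternion `α` is a product of two pure ones: choosing a nonzero pure `p` with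
`p * α` pure, `α = (s⁻¹ • p) * (p * α)`.
-/

open Quaternion

namespace QuaternionAlgebra

section CommRing

variable {R : Type*} [CommRing R] {c₁ c₂ : R}

theorem star_eq_neg_of_re_eq_zero {p : ℍ[R, c₁, c₂]} (hp : p.re = 0) : star p = -p := by
  ext <;> simp [hp]

theorem mul_self_eq_coe_of_re_eq_zero {p : ℍ[R, c₁, c₂]} (hp : p.re = 0) :
    p * p = ((p * p).re : ℍ[R, c₁, c₂]) := by
  have h := mul_star_eq_coe p
  rwa [star_eq_neg_of_re_eq_zero hp, mul_neg, re_neg, coe_neg, neg_inj] at h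

theorem mul_comm_eq_neg_of_re_eq_zero {p v : ℍ[R, c₁, c₂]} (hp : p.re = 0) (hv : v.re = 0)
    (hpv : (p * v).re = 0) : v * p = -(p * v) := by
  rw [← star_eq_neg_of_re_eq_zero hpv, star_mul, star_eq_neg_of_re_eq_zero hp,
    star_eq_neg_of_re_eq_zero hv, neg_mul_neg]

theorem exists_re_eq_zero_and_re_mul_eq_zero [Nontrivial R] (α : ℍ[R, c₁, c₂]) :
    ∃ p : ℍ[R, c₁, c₂], p ≠ 0 ∧ p.re = 0 ∧ (p * α).re = 0 := by
  by_cases h : c₁ * α.imI = 0 ∧ c₂ * α.imJ = 0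
  · refine ⟨⟨0, 1, 0, 0⟩, fun h0 => one_ne_zero congr(($h0).imI), rfl, ?_⟩
    simp [h.1]
  · refine ⟨⟨0, c₂ * α.imJ, -(c₁ * α.imI), 0⟩, fun h0 => h ⟨?_, ?_⟩, rfl, ?_⟩
    · simpa using congr(($h0).imJ)
    · simpa using congr(($h0).imI)
    · simp only [re_mul]
      ring

end CommRing

section Field

variable {R : Type*} [Field R] {c₁ c₂ : R}

theorem re_mul_self_ne_zero {p : ℍ[R, c₁, c₂]} (hp : p.re = 0) (hu : IsUnit p) :
    (p * p).re ≠ 0 := by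
  intro h0
  have hu2 := hu.mul hu
  rw [mul_self_eq_coe_of_re_eq_zero hp, h0, coe_zero] at hu2
  exact not_isUnit_zero hu2

theorem lie_mul_eq_smul_of_re_mul_eq_zero {p v : ℍ[R, c₁, c₂]} (hp : p.re = 0)
    (hv : v.re = 0) (hpv : (p * v).re = 0) : ⁅p, p * v⁆ = (2 * (p * p).re) • v := by
  rw [Ring.lie_def, mul_assoc p v, mul_comm_eq_neg_of_re_eq_zero hp hv hpv, mul_neg,
    sub_neg_eq_add, ← mul_assoc, ← two_smul R, mul_self_eq_coe_of_re_eq_zero hp,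
    coe_mul_eq_smul, smul_smul, re_coe]

theorem exists_commutator_eq_of_re_eq_zero (h2 : (2 : R) ≠ 0)
    (hdiv : ∀ x : ℍ[R, c₁, c₂], x ≠ 0 → IsUnit x) {v : ℍ[R, c₁, c₂]} (hv : v.re = 0) :
    ∃ x y : ℍ[R, c₁, c₂], v = x * y - y * x := by
  obtain ⟨p, hp0, hp, hpv⟩ := exists_re_eq_zero_and_re_mul_eq_zero v
  have h2s := mul_ne_zero h2 (re_mul_self_ne_zero hp (hdiv p hp0))
  refine ⟨p, (2 * (p * p).re)⁻¹ • (p * v), ?_⟩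
  rw [mul_smul_comm, smul_mul_assoc, ← smul_sub, ← Ring.lie_def,
    lie_mul_eq_smul_of_re_mul_eq_zero hp hv hpv, smul_smul,
    inv_mul_cancel₀ h2s, one_smul]

theorem exists_eq_mul_of_re_eq_zero (hdiv : ∀ x : ℍ[R, c₁, c₂], x ≠ 0 → IsUnit x)
    (α : ℍ[R, c₁, c₂]) : ∃ p q : ℍ[R, c₁, c₂], p.re = 0 ∧ q.re = 0 ∧ α = p * q := by
  obtain ⟨p, hp0, hp, hpα⟩ := exists_re_eq_zero_and_re_mul_eq_zero α
  have hs := re_mul_self_ne_zero hp (hdiv p hp0)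
  set s := (p * p).re
  have hsq : p * p = s := mul_self_eq_coe_of_re_eq_zero hp
  refine ⟨s⁻¹ • p, p * α, by simp [hp], hpα, ?_⟩
  rw [smul_mul_assoc, ← mul_assoc, hsq, coe_mul_eq_smul, smul_smul, inv_mul_cancel₀ hs,
    one_smul]

end Field

end QuaternionAlgebra

open QuaternionAlgebra in
theorem stmt_13_general (F : Type*) [Field F] (h2 : (2 : F) ≠ 0)
    (hdiv : ∀ x : ℍ[F, -1, -1], x ≠ 0 → IsUnit x)
    (α : ℍ[F, -1, -1]) :
    ∃ x₁ y₁ x₂ y₂ : ℍ[F, -1, -1],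
      α = (x₁ * y₁ - y₁ * x₁) * (x₂ * y₂ - y₂ * x₂) := by
  obtain ⟨p, q, hp, hq, rfl⟩ := exists_eq_mul_of_re_eq_zero hdiv α
  obtain ⟨x₁, y₁, rfl⟩ := exists_commutator_eq_of_re_eq_zero h2 hdiv hp
  obtain ⟨x₂, y₂, rfl⟩ := exists_commutator_eq_of_re_eq_zero h2 hdiv hq
  exact ⟨x₁, y₁, x₂, y₂, rfl⟩

/-- over a Pythagorean field of characteristic not 2, every element of the
division quaternion algebra `ℍ(1,1)_F` is a product of two commutators. -/
theorem stmt_13 (F : Type*) [Field F] (h2 : (2 : F) ≠ 0)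
    (hpyth : ∀ x y : F, ∃ z : F, x ^ 2 + y ^ 2 = z ^ 2)
    (hdiv : ∀ x : ℍ[F, -1, -1], x ≠ 0 → IsUnit x)
    (α : ℍ[F, -1, -1]) :
    ∃ x₁ y₁ x₂ y₂ : ℍ[F, -1, -1],
      α = (x₁ * y₁ - y₁ * x₁) * (x₂ * y₂ - y₂ * x₂) :=
  stmt_13_general F h2 hdiv α
end

section
/- Let H be a division quaternion algebra over a field F of characteristic 2. Then every element of H is of the form (x₁x₂ − x₂x₁) + (x₃x₄ − x₄x₃)(x₅x₆ − x₆x₅) for some x₁,…,x₆ ∈ H; that is, the image on H of the polynomial p = s₂(x₁,x₂) + s₂(x₃,x₄)s₂(x₅,x₆) is all of H. -/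
/-!
Writing `⁅x, y⁆ = x * y - y * x` and `k = i * j`, the relation `i * j = j * (i + 1)` reads
`⁅i, j⁆ = j`, whence `⁅i, k⁆ = k` and `⁅k, j⁆ = j * j = b`. These three brackets alone make every
`a + c j + d k` a single commutator (divide by `d`, or by `b` when `d = 0`), and the missing
`i`-coordinate is a product of two commutators: `⁅i, k⁆ * ⁅(r / b) i, j⁆ = (r / b) k j = r i`.
-/

section LieAlgebra

variable {F L : Type*} [Field F] [LieRing L] [LieAlgebra F L] {e f g z : L} {b : F}

theorem exists_lie_eq_smul_add_smul_add_smul (hef : ⁅e, f⁆ = f) (heg : ⁅e, g⁆ = g)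
    (hgf : ⁅g, f⁆ = b • z) (hb : b ≠ 0) (a c d : F) :
    ∃ x y : L, ⁅x, y⁆ = a • z + c • f + d • g := by
  by_cases hd : d = 0
  · refine ⟨c • e + (a / b) • g, f, ?_⟩
    rw [hd, zero_smul, add_zero, add_lie, smul_lie, smul_lie, hef, hgf, smul_smul,
      div_mul_cancel₀ a hb, add_comm]
  · refine ⟨e - (a / (d * b)) • f, c • f + d • g, ?_⟩
    rw [sub_lie, lie_add, lie_add, lie_smul, lie_smul, smul_lie, smul_lie, lie_smul, lie_smul,
      lie_self, ← lie_skew f g, hef, heg, hgf, smul_zero, smul_zero, smul_neg, smul_neg,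
      smul_smul, smul_smul, show a / (d * b) * d * b = a by field_simp]
    abel

end LieAlgebra

section QuaternionRelations

attribute [local instance] LieRing.ofAssociativeRing

variable {F H : Type*} [Field F] [Ring H] [Algebra F H] {i j : H}

theorem lie_eq_of_mul_eq_mul_add_one (hij : i * j = j * (i + 1)) : ⁅i, j⁆ = j := by
  rw [Ring.lie_def, hij, mul_add_one, add_sub_cancel_left]

theorem lie_left_mul_of_lie_eq (hlie : ⁅i, j⁆ = j) : ⁅i, i * j⁆ = i * j := by
  rw [Ring.lie_def] at hlie ⊢
  calc i * (i * j) - i * j * i = i * (i * j - j * i) := by noncomm_ring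
    _ = i * j := by rw [hlie]

theorem lie_mul_right_of_lie_eq (hlie : ⁅i, j⁆ = j) : ⁅i * j, j⁆ = j * j := by
  rw [Ring.lie_def] at hlie ⊢
  calc i * j * j - j * (i * j) = (i * j - j * i) * j := by noncomm_ring
    _ = j * j := by rw [hlie]

theorem exists_lie_mul_lie_eq_smul (hlie : ⁅i, j⁆ = j) {b : F} (hb : b ≠ 0)
    (hj : j * j = algebraMap F H b) (r : F) :
    ∃ x y z w : H, ⁅x, y⁆ * ⁅z, w⁆ = r • i := by
  refine ⟨i, i * j, (r / b) • i, j, ?_⟩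
  rw [smul_lie, lie_left_mul_of_lie_eq hlie, hlie, mul_smul_comm, mul_assoc, hj,
    Algebra.algebraMap_eq_smul_one, mul_smul_one, smul_smul, div_mul_cancel₀ r hb]

end QuaternionRelations

theorem stmt_14_general (F : Type*) [Field F]
    (H : Type*) [Ring H] [Algebra F H]
    (i j k : H)
    (bH : Module.Basis (Fin 4) F H)
    (hbasis : bH 0 = 1 ∧ bH 1 = i ∧ bH 2 = j ∧ bH 3 = k)
    (hj : ∃ b : F, b ≠ 0 ∧ j * j = algebraMap F H b)
    (hk : k = i * j) (hij : i * j = j * (i + 1))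
    (α : H) :
    ∃ x₁ x₂ x₃ x₄ x₅ x₆ : H,
      α = (x₁ * x₂ - x₂ * x₁) + (x₃ * x₄ - x₄ * x₃) * (x₅ * x₆ - x₆ * x₅) := by
  -- not a section instance: in force while the statement elaborates, it would supply its `-`
  let := LieRing.ofAssociativeRing (A := H)
  obtain ⟨h0, h1, h2, h3⟩ := hbasis
  obtain ⟨b, hb, hjj⟩ := hj
  have hlie := lie_eq_of_mul_eq_mul_add_one hij
  have hkj : ⁅i * j, j⁆ = b • (1 : H) := by
    rw [lie_mul_right_of_lie_eq hlie, hjj, Algebra.algebraMap_eq_smul_one]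
  obtain ⟨x₁, x₂, hlie₁⟩ := exists_lie_eq_smul_add_smul_add_smul hlie
    (lie_left_mul_of_lie_eq hlie) hkj hb (bH.repr α 0) (bH.repr α 2) (bH.repr α 3)
  obtain ⟨x₃, x₄, x₅, x₆, hlie₂⟩ := exists_lie_mul_lie_eq_smul hlie hb hjj (bH.repr α 1)
  refine ⟨x₁, x₂, x₃, x₄, x₅, x₆, ?_⟩
  rw [← Ring.lie_def, ← Ring.lie_def, ← Ring.lie_def, hlie₁, hlie₂]
  conv_lhs => rw [← bH.sum_repr α, Fin.sum_univ_four, h0, h1, h2, h3, hk]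
  abel

/-- on a division quaternion algebra in characteristic 2, the image of
`p = s₂(x₁,x₂) + s₂(x₃,x₄)s₂(x₅,x₆)` is all of `H`. -/
theorem stmt_14 (F : Type*) [Field F] (hchar : ringChar F = 2)
    (H : Type*) [Ring H] [Algebra F H]
    (i j k : H)
    (bH : Module.Basis (Fin 4) F H)
    (hbasis : bH 0 = 1 ∧ bH 1 = i ∧ bH 2 = j ∧ bH 3 = k)
    (hi : ∃ t : F, i * i + i = algebraMap F H t)
    (hj : ∃ b : F, b ≠ 0 ∧ j * j = algebraMap F H b)
    (hk : k = i * j) (hij : i * j = j * (i + 1))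
    (hdiv : ∀ x : H, x ≠ 0 → IsUnit x)
    (α : H) :
    ∃ x₁ x₂ x₃ x₄ x₅ x₆ : H,
      α = (x₁ * x₂ - x₂ * x₁) + (x₃ * x₄ - x₄ * x₃) * (x₅ * x₆ - x₆ * x₅) :=
  stmt_14_general F H i j k bH hbasis hj hk hij α
end

section
/- Let R be a ring, n ≥ 2, and let p be a multilinear polynomial over the center Z(R) in m noncommuting variables. If the image p(Mₙ(R)) is contained in {0} ∪ (Mₙ(R) \ slₙ(R)) (i.e., every value of p is either 0 or has nonzero trace) and p(Mₙ(R)) ≠ {0}, then p(Mₙ(R)) ⊆ Z(Mₙ(R)), i.e., every value of p is a central scalar matrix a·Iₙ with a ∈ Z(R). -/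
/-!
Grade `Mₙ(R)` by `ℤ/n`, the matrix unit `e_ij` having degree `j - i`. A multilinear polynomial
sends homogeneous arguments to a homogeneous value whose degree is the sum of theirs, and a
homogeneous matrix of nonzero degree has zero diagonal, hence zero trace; by hypothesis such a
value of `p` vanishes. Expanding every argument into homogeneous components therefore shows that
all values of `p` are diagonal. As the coefficients are central, `p` commutes with conjugation
by units, so every conjugate of a value is again diagonal; conjugating by `1 + r e_ij` forces the
diagonal entries to be equal to one another and to commute with every `r`.
-/

def multilinearPolynomial {A S : Type*} [Semiring A] [Monoid S] [DistribMulAction S A]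
    {m : ℕ} (lam : Equiv.Perm (Fin m) → S) : MultilinearMap ℕ (fun _ : Fin m => A) A :=
  ∑ σ, lam σ • (MultilinearMap.mkPiAlgebraFin ℕ m A).domDomCongr σ

theorem multilinearPolynomial_apply {A S : Type*} [Semiring A] [Monoid S]
    [DistribMulAction S A] {m : ℕ} (lam : Equiv.Perm (Fin m) → S) (B : Fin m → A) :
    multilinearPolynomial lam B = ∑ σ, lam σ • (List.ofFn fun t => B (σ t)).prod := by
  simp [multilinearPolynomial]

theorem Units.list_prod_map_conj {M : Type*} [Monoid M] (u : Mˣ) (l : List M) :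
    (l.map fun x => (u : M) * x * ↑u⁻¹).prod = u * l.prod * ↑u⁻¹ := by
  induction l with
  | nil => simp
  | cons x l ih => rw [List.map_cons, List.prod_cons, ih]; simp [mul_assoc]

namespace Matrix

section Grading

variable {ι R : Type*} [AddCommGroup ι] [Semiring R]

def IsHomogeneous (d : ι) (X : Matrix ι ι R) : Prop :=
  ∀ i j, j - i ≠ d → X i j = 0

theorem isHomogeneous_zero (d : ι) : IsHomogeneous d (0 : Matrix ι ι R) :=
  fun _ _ _ => rfl

theorem isHomogeneous_one [DecidableEq ι] : IsHomogeneous 0 (1 : Matrix ι ι R) :=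
  fun _ _ h => one_apply_ne (by rintro rfl; exact h (sub_self _))

theorem IsHomogeneous.mul [Fintype ι] {a b : ι} {X Y : Matrix ι ι R}
    (hX : IsHomogeneous a X) (hY : IsHomogeneous b Y) : IsHomogeneous (a + b) (X * Y) := by
  intro i j hij
  rw [mul_apply]
  refine Finset.sum_eq_zero fun k _ => ?_
  by_cases hk : k - i = a
  · rw [hY k j fun h => hij (by rw [← hk, ← h, sub_add_sub_cancel']), mul_zero]
  · rw [hX i k hk, zero_mul]

theorem IsHomogeneous.smul {S : Type*} [SMulZeroClass S R] {d : ι} {X : Matrix ι ι R} (s : S)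
    (h : IsHomogeneous d X) : IsHomogeneous d (s • X) := fun i j hij => by
  rw [smul_apply, h i j hij, smul_zero]

theorem IsHomogeneous.sum {κ : Type*} {s : Finset κ} {d : ι} {X : κ → Matrix ι ι R}
    (h : ∀ k ∈ s, IsHomogeneous d (X k)) : IsHomogeneous d (∑ k ∈ s, X k) := fun i j hij => by
  rw [sum_apply]
  exact Finset.sum_eq_zero fun k hk => h k hk i j hij

theorem isHomogeneous_prod_ofFn [Fintype ι] [DecidableEq ι] {m : ℕ} {d : Fin m → ι}
    {X : Fin m → Matrix ι ι R} (h : ∀ t, IsHomogeneous (d t) (X t)) :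
    IsHomogeneous (∑ t, d t) (List.ofFn X).prod := by
  induction m with
  | zero => simpa using isHomogeneous_one
  | succ m ih =>
    rw [List.ofFn_succ, List.prod_cons, Fin.sum_univ_succ]
    exact (h 0).mul (ih fun t => h t.succ)

theorem isHomogeneous_multilinearPolynomial_apply [Fintype ι] [DecidableEq ι] {S : Type*}
    [Monoid S] [DistribMulAction S R] {m : ℕ} (lam : Equiv.Perm (Fin m) → S)
    {d : Fin m → ι} {B : Fin m → Matrix ι ι R} (h : ∀ k, IsHomogeneous (d k) (B k)) :
    IsHomogeneous (∑ k, d k) (multilinearPolynomial lam B) := by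
  rw [multilinearPolynomial_apply]
  refine IsHomogeneous.sum fun σ _ => IsHomogeneous.smul _ ?_
  rw [← Equiv.sum_comp σ d]
  exact isHomogeneous_prod_ofFn fun t => h (σ t)

theorem IsHomogeneous.isDiag {X : Matrix ι ι R} (h : IsHomogeneous 0 X) : X.IsDiag :=
  fun i j hij => h i j (sub_ne_zero.mpr hij.symm)

theorem IsHomogeneous.trace_eq_zero [Fintype ι] {d : ι} (hd : d ≠ 0) {X : Matrix ι ι R}
    (h : IsHomogeneous d X) : X.trace = 0 :=
  Finset.sum_eq_zero fun i _ => h i i (by rw [sub_self]; exact hd.symm)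

def homogeneousComponent [DecidableEq ι] (d : ι) (X : Matrix ι ι R) : Matrix ι ι R :=
  of fun i j => if j - i = d then X i j else 0

theorem isHomogeneous_homogeneousComponent [DecidableEq ι] (d : ι) (X : Matrix ι ι R) :
    IsHomogeneous d (homogeneousComponent d X) := fun _ _ h => if_neg h

theorem sum_homogeneousComponent [Fintype ι] [DecidableEq ι] (X : Matrix ι ι R) :
    ∑ d, homogeneousComponent d X = X := by
  ext i j
  simp [homogeneousComponent, sum_apply]

theorem isDiag_apply_of_eq_zero_or_trace_ne_zero [Fintype ι] [DecidableEq ι] {S κ : Type*}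
    [Semiring S] [Module S R] [Fintype κ] [DecidableEq κ]
    (f : MultilinearMap S (fun _ : κ => Matrix ι ι R) (Matrix ι ι R))
    (hf : ∀ (d : κ → ι) (B : κ → Matrix ι ι R),
      (∀ k, IsHomogeneous (d k) (B k)) → IsHomogeneous (∑ k, d k) (f B))
    (htrace : ∀ B, f B = 0 ∨ (f B).trace ≠ 0) (B : κ → Matrix ι ι R) : (f B).IsDiag := by
  have hsplit : f B = ∑ d : κ → ι, f fun k => homogeneousComponent (d k) (B k) := by
    simpa only [sum_homogeneousComponent] using
      f.map_sum fun k d => homogeneousComponent d (B k)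
  suffices ∀ d : κ → ι, IsHomogeneous 0 (f fun k => homogeneousComponent (d k) (B k)) by
    rw [hsplit]
    exact (IsHomogeneous.sum fun d _ => this d).isDiag
  intro d
  have hd := hf d _ fun k => isHomogeneous_homogeneousComponent (d k) (B k)
  by_cases h0 : ∑ k, d k = 0
  · rwa [h0] at hd
  · rcases htrace fun k => homogeneousComponent (d k) (B k) with hzero | htr
    · rw [hzero]; exact isHomogeneous_zero 0
    · exact absurd (hd.trace_eq_zero h0) htr

end Grading

section Conjugation

variable {ι R : Type*} [Fintype ι] [DecidableEq ι] [Ring R]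

theorem mul_smul_of_mem_center {r : R} (hr : r ∈ Set.center R) (M N : Matrix ι ι R) :
    M * (r • N) = r • (M * N) := by
  rw [smul_eq_diagonal_mul, smul_eq_diagonal_mul, ← Matrix.mul_assoc, ← Matrix.mul_assoc]
  congr 1
  exact ((scalar_commute r (fun r' => (Semigroup.mem_center_iff.mp hr r').symm) M).eq).symm

theorem multilinearPolynomial_conj {m : ℕ} {lam : Equiv.Perm (Fin m) → R}
    (hlam : ∀ σ, lam σ ∈ Set.center R) (u : (Matrix ι ι R)ˣ) (B : Fin m → Matrix ι ι R) :
    multilinearPolynomial lam (fun k => u * B k * u⁻¹) =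
      u * multilinearPolynomial lam B * u⁻¹ := by
  simp only [multilinearPolynomial_apply, Finset.mul_sum, Finset.sum_mul]
  refine Finset.sum_congr rfl fun σ _ => ?_
  rw [mul_smul_of_mem_center (hlam σ), smul_mul, ← Units.list_prod_map_conj, List.map_ofFn]
  rfl

def unitOneAddSingle {i j : ι} (hij : i ≠ j) (r : R) : (Matrix ι ι R)ˣ where
  val := 1 + single i j r
  inv := 1 - single i j r
  val_inv := by simp [mul_sub, add_mul, hij.symm]
  inv_val := by simp [sub_mul, mul_add, hij.symm]

theorem IsDiag.conj_one_add_single_apply {X : Matrix ι ι R} (hX : X.IsDiag) {i j : ι}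
    (hij : i ≠ j) (r : R) :
    ((1 + single i j r) * X * (1 - single i j r)) i j = r * X j j - X i i * r := by
  simp [add_mul, mul_sub, single_mul_apply_same, mul_single_apply_same, hX hij, hX hij.symm]

theorem exists_mem_center_eq_smul_one_of_forall_isDiag_conj [Nontrivial ι] {X : Matrix ι ι R}
    (hX : ∀ u : (Matrix ι ι R)ˣ, ((u : Matrix ι ι R) * X * u⁻¹).IsDiag) :
    ∃ a ∈ Set.center R, X = a • 1 := by
  have hdiag : X.IsDiag := by simpa using hX 1
  have hcomm : ∀ i j, i ≠ j → ∀ r, r * X j j = X i i * r := fun i j hij r => by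
    have := hX (unitOneAddSingle hij r) hij
    rwa [unitOneAddSingle, Units.inv_mk, Units.val_mk, hdiag.conj_one_add_single_apply hij,
      sub_eq_zero] at this
  have hconst : ∀ i j, X i i = X j j := fun i j => by
    rcases eq_or_ne i j with rfl | hij
    · rfl
    · simpa using (hcomm i j hij 1).symm
  obtain ⟨i₀, j₀, hne⟩ := exists_pair_ne ι
  refine ⟨X i₀ i₀, Semigroup.mem_center_iff.mpr fun r => ?_, ?_⟩
  · simpa only [hconst j₀ i₀] using hcomm i₀ j₀ hne r
  · ext i j
    rcases eq_or_ne i j with rfl | hij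
    · simp [hconst i i₀]
    · simp [hdiag hij, one_apply_ne hij]

end Conjugation

end Matrix

/-- if a multilinear polynomial over the center of `R` takes only values
that are zero or of nonzero trace on `Mₙ(R)` (`n ≥ 2`), and is not identically zero,
then all its values are central scalar matrices. -/
theorem stmt_16 (R : Type*) [Ring R] (n : ℕ) (hn : 2 ≤ n)
    (m : ℕ) (lam : Equiv.Perm (Fin m) → R)
    (hlam : ∀ σ, lam σ ∈ Set.center R) :
    (∀ B : Fin m → Matrix (Fin n) (Fin n) R,
        (∑ σ : Equiv.Perm (Fin m), lam σ • (List.ofFn fun t => B (σ t)).prod) = 0 ∨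
        (∑ σ : Equiv.Perm (Fin m), lam σ • (List.ofFn fun t => B (σ t)).prod).trace ≠ 0) →
    (∃ B : Fin m → Matrix (Fin n) (Fin n) R,
        (∑ σ : Equiv.Perm (Fin m), lam σ • (List.ofFn fun t => B (σ t)).prod) ≠ 0) →
    ∀ B : Fin m → Matrix (Fin n) (Fin n) R,
      ∃ a ∈ Set.center R,
        (∑ σ : Equiv.Perm (Fin m), lam σ • (List.ofFn fun t => B (σ t)).prod) =
          a • (1 : Matrix (Fin n) (Fin n) R) := by
  intro hvalues _ B
  have : NeZero n := ⟨by omega⟩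
  have : Nontrivial (Fin n) := Fin.nontrivial_iff_two_le.mpr hn
  simp only [← multilinearPolynomial_apply] at hvalues ⊢
  have hdiag : ∀ B : Fin m → Matrix (Fin n) (Fin n) R, (multilinearPolynomial lam B).IsDiag :=
    Matrix.isDiag_apply_of_eq_zero_or_trace_ne_zero _
      (fun _ _ h => Matrix.isHomogeneous_multilinearPolynomial_apply lam h) hvalues
  refine Matrix.exists_mem_center_eq_smul_one_of_forall_isDiag_conj fun u => ?_
  rw [← Matrix.multilinearPolynomial_conj hlam]
  exact hdiag _
end

section
/- Let R be a ring, n ≥ 2, p a multilinear polynomial over Z(R), and suppose D = p(B₁,…,B_m) is a diagonal matrix Σᵢ aᵢe_{ii} in Mₙ(R), and suppose conjugating all arguments by Iₙ + e_{1j} (for each j ≥ 2) again yields a diagonal matrix. Then (Iₙ + e_{1j}) D (Iₙ + e_{1j})⁻¹ = D + (a_j − a₁)e_{1j}, hence a₁ = a_j for all j, i.e., D is a scalar matrix. -/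
namespace Matrix

variable {l m n α : Type*}

theorem single_mul_diagonal [Fintype m] [DecidableEq l] [DecidableEq m]
    [NonUnitalNonAssocSemiring α] (i : l) (j : m) (c : α) (d : m → α) :
    single i j c * diagonal d = single i j (c * d j) := by
  ext a b
  rw [mul_diagonal, single_apply, single_apply]
  split_ifs with h
  · rw [h.2]
  · exact zero_mul _

theorem diagonal_mul_single [Fintype l] [DecidableEq l] [DecidableEq m]
    [NonUnitalNonAssocSemiring α] (d : l → α) (i : l) (j : m) (c : α) :
    diagonal d * single i j c = single i j (d i * c) := by
  ext a b
  rw [diagonal_mul, single_apply, single_apply]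
  split_ifs with h
  · rw [h.1]
  · exact mul_zero _

variable [DecidableEq n]

theorem one_add_single_mul_diagonal_mul_one_sub_single [Fintype n] [Ring α] {i j : n}
    (hij : i ≠ j) (d : n → α) :
    (1 + single i j 1) * diagonal d * (1 - single i j 1) =
      diagonal d + single i j (d j - d i) := by
  rw [add_mul, one_mul, single_mul_diagonal, one_mul, mul_sub, mul_one, add_mul,
    diagonal_mul_single, mul_one, single_mul_single_of_ne _ _ _ _ hij.symm, add_zero,
    sub_eq_add_neg (d j), single_add, ← single_neg]
  abel

theorem isDiag_diagonal_add_single_iff [AddZeroClass α] {i j : n} (hij : i ≠ j)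
    (d : n → α) (c : α) :
    (diagonal d + single i j c).IsDiag ↔ c = 0 := by
  constructor
  · intro h
    simpa [hij] using h hij
  · rintro rfl
    simp

end Matrix

open Matrix in
theorem stmt_17_general (R : Type*) [Ring R] (n : ℕ) [NeZero n] (d : Fin n → R) :
    (∀ j : Fin n, j ≠ 0 →
        (1 + Matrix.single (0 : Fin n) j (1 : R)) * Matrix.diagonal d *
            (1 - Matrix.single (0 : Fin n) j (1 : R)) =
          Matrix.diagonal d + Matrix.single (0 : Fin n) j (d j - d 0)) ∧
    ((∀ j : Fin n, j ≠ 0 →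
        ((1 + Matrix.single (0 : Fin n) j (1 : R)) * Matrix.diagonal d *
            (1 - Matrix.single (0 : Fin n) j (1 : R))).IsDiag) →
      (∀ j : Fin n, d j = d 0) ∧
        Matrix.diagonal d = d 0 • (1 : Matrix (Fin n) (Fin n) R)) := by
  refine ⟨fun j hj => one_add_single_mul_diagonal_mul_one_sub_single hj.symm d,
    fun hconj => ?_⟩
  have hd : ∀ j, d j = d 0 := by
    intro j
    rcases eq_or_ne j 0 with rfl | hj
    · rfl
    · have hdiag := hconj j hj
      rwa [one_add_single_mul_diagonal_mul_one_sub_single hj.symm,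
        isDiag_diagonal_add_single_iff hj.symm, sub_eq_zero] at hdiag
  exact ⟨hd, by rw [smul_one_eq_diagonal]; exact congrArg diagonal (funext hd)⟩

/-- for a diagonal matrix `D = diagonal d` in `Mₙ(R)` (`n ≥ 2`),
conjugation by `Iₙ + e_{0j}` (for `j ≠ 0`) satisfies
`(Iₙ + e_{0j}) D (Iₙ + e_{0j})⁻¹ = D + (d j − d 0) e_{0j}` where
`(Iₙ + e_{0j})⁻¹ = Iₙ − e_{0j}`; hence if all these conjugates are again diagonal,
then `d j = d 0` for all `j`, i.e. `D` is the scalar matrix `d 0 • Iₙ`. -/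
theorem stmt_17 (R : Type*) [Ring R] (n : ℕ) [NeZero n] (hn : 2 ≤ n) (d : Fin n → R) :
    (∀ j : Fin n, j ≠ 0 →
        (1 + Matrix.single (0 : Fin n) j (1 : R)) * Matrix.diagonal d *
            (1 - Matrix.single (0 : Fin n) j (1 : R)) =
          Matrix.diagonal d + Matrix.single (0 : Fin n) j (d j - d 0)) ∧
    ((∀ j : Fin n, j ≠ 0 →
        ((1 + Matrix.single (0 : Fin n) j (1 : R)) * Matrix.diagonal d *
            (1 - Matrix.single (0 : Fin n) j (1 : R))).IsDiag) →
      (∀ j : Fin n, d j = d 0) ∧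
        Matrix.diagonal d = d 0 • (1 : Matrix (Fin n) (Fin n) R)) :=
  stmt_17_general R n d
end

section
/- Let F be a field of characteristic 2 and H a quaternion algebra over F. Let S = {αj² + βj + γk : α, β, γ ∈ F} (the set of commutators of H). If y, z ∈ S are such that s₂(y,z) = yz − zy is nonzero and invertible in H, then every α ∈ H can be written as α = s₂(α·s₂(y,z)⁻¹·y, z) + s₂(z, α·s₂(y,z)⁻¹)·y. -/
theorem Ring.lie_mul_add_lie_mul {R : Type*} [Ring R] (a y z : R) :
    ⁅a * y, z⁆ + ⁅z, a⁆ * y = a * ⁅y, z⁆ := by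
  simp only [Ring.lie_def]
  noncomm_ring

theorem stmt_19_general (H : Type*) [Ring H] (y z : H) (s' : H) (hs' : s' * (y * z - z * y) = 1)
    (α : H) :
    α = ((α * s' * y) * z - z * (α * s' * y)) + (z * (α * s') - (α * s') * z) * y := by
  calc α = α * s' * (y * z - z * y) := by rw [mul_assoc, hs', mul_one]
    _ = _ := by simpa only [Ring.lie_def] using (Ring.lie_mul_add_lie_mul (α * s') y z).symm

/-- the Waring-type identity `α = s₂(α s⁻¹ y, z) + s₂(z, α s⁻¹) y`
where `s = s₂(y,z)` is invertible, for `y, z` commutators of a characteristic-2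
quaternion algebra. -/
theorem stmt_19 (F : Type*) [Field F] (hchar : ringChar F = 2)
    (H : Type*) [Ring H] [Algebra F H]
    (i j k : H)
    (hi : ∃ t : F, i * i + i = algebraMap F H t)
    (hj : ∃ b : F, b ≠ 0 ∧ j * j = algebraMap F H b)
    (hk : k = i * j) (hij : i * j = j * (i + 1))
    (y z : H)
    (hy : ∃ α β γ : F, y = α • (j * j) + β • j + γ • k)
    (hz : ∃ α β γ : F, z = α • (j * j) + β • j + γ • k)
    (hne : y * z - z * y ≠ 0)
    (s' : H) (hs : (y * z - z * y) * s' = 1) (hs' : s' * (y * z - z * y) = 1)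
    (α : H) :
    α = ((α * s' * y) * z - z * (α * s' * y)) + (z * (α * s') - (α * s') * z) * y :=
  stmt_19_general H y z s' hs' α
end
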